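/- arXiv:2511.09487 — 2 statements merged into one kernel-verified Lean document; each statement's English description precedes it below -/
import Mathlib

section
/- Let A = {a_1, …, a_l} be a finite subset of a metric space with diameter diam(A) ≤ m. Let A₁ and A₂ be the (random) sets of distinct elements obtained from S₁ and S₂ independent i.i.d. uniform draws from A, respectively, with S₁, S₂ ≥ 1 so that both are nonempty. Let φ : [0,∞) → ℝ be non-decreasing. Then E[φ(h(A₁, A₂))] ≤ (φ(m) − φ(0)) · λ(l, S₁, S₂) + φ(0), where h denotes the Hausdorff distance and λ(l, S₁, S₂) = l[(1 − 1/l)^{S₁} + (1 − 1/l)^{S₂} − 2(1 − 1/l)^{S₁+S₂}]. -/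
/-!
Both sampled sets lie in `A`, so their Hausdorff distance is at most `diam A ≤ m`, and it vanishes
when they coincide; by monotonicity of `φ`, `E[φ(h)] ≤ φ 0 + (φ m - φ 0) · P(A₁ ≠ A₂)`.
If `A₁ ≠ A₂`, some point `aᵢ` is drawn in exactly one of the two samples; by independence this
has probability `qᵢ(1 - qⱼ) + (1 - qᵢ)qⱼ` with `q = (1 - 1/l)^S` the chance of missing `aᵢ` in
`S` draws, and the union bound over the `l` points gives `P(A₁ ≠ A₂) ≤ λ(l, S₁, S₂)`.
-/

open MeasureTheory Metric

lemma Metric.hausdorffDist_le_diam_of_subset {X : Type*} [PseudoMetricSpace X] {s t u : Set X}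
    (hs : s.Nonempty) (ht : t.Nonempty) (hu : Bornology.IsBounded u) (hsu : s ⊆ u)
    (htu : t ⊆ u) : hausdorffDist s t ≤ diam u :=
  (hausdorffDist_le_diam hs (hu.subset hsu) ht (hu.subset htu)).trans
    (diam_mono (Set.union_subset hsu htu) hu)

namespace MeasureTheory

lemma integral_le_of_le_on_of_le_off {Ω : Type*} [MeasurableSpace Ω] {μ : Measure Ω}
    [IsProbabilityMeasure μ] {f : Ω → ℝ} (hf : Integrable f μ) {E : Set Ω}
    (hE : MeasurableSet E) {b B : ℝ} (hfE : ∀ x ∈ E, f x ≤ B) (hfEc : ∀ x ∉ E, f x ≤ b) :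
    ∫ x, f x ∂μ ≤ (B - b) * μ.real E + b := by
  have hle : ∀ x, f x ≤ E.indicator (fun _ => B - b) x + b := by
    intro x
    by_cases hx : x ∈ E
    · simpa [hx] using hfE x hx
    · simpa [hx] using hfEc x hx
  calc ∫ x, f x ∂μ ≤ ∫ x, (E.indicator (fun _ => B - b) x + b) ∂μ :=
        integral_mono hf (((integrable_const _).indicator hE).add (integrable_const b)) hle
    _ = (B - b) * μ.real E + b := by
        rw [integral_add ((integrable_const _).indicator hE) (integrable_const b),
          integral_indicator_const _ hE, integral_const, probReal_univ, smul_eq_mul,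
          smul_eq_mul, one_mul, mul_comm]

lemma measureReal_uniformOfFinset_univ_singleton {α : Type*} [Fintype α] [MeasurableSpace α]
    [MeasurableSingletonClass α] (h : (Finset.univ : Finset α).Nonempty) (x : α) :
    (PMF.uniformOfFinset Finset.univ h).toMeasure.real {x} = (Fintype.card α : ℝ)⁻¹ := by
  rw [measureReal_def, PMF.toMeasure_apply_singleton _ _ (measurableSet_singleton x),
    PMF.uniformOfFinset_apply_of_mem h (Finset.mem_univ x), Finset.card_univ,
    ENNReal.toReal_inv, ENNReal.toReal_natCast]

lemma measureReal_pi_setOf_not_mem_range {ι α : Type*} [Fintype ι] [MeasurableSpace α]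
    [MeasurableSingletonClass α] (ν : Measure α) [IsProbabilityMeasure ν] (i : α) :
    (Measure.pi fun _ : ι => ν).real {f | i ∉ Set.range f} =
      (1 - ν.real {i}) ^ Fintype.card ι := by
  have hset : {f : ι → α | i ∉ Set.range f} = Set.univ.pi fun _ => {i}ᶜ := by
    ext f
    simp [eq_comm]
  rw [hset, measureReal_def, Measure.pi_pi, ENNReal.toReal_prod, Finset.prod_const,
    Finset.card_univ, ← measureReal_def, probReal_compl_eq_one_sub (measurableSet_singleton i)]

/-- Two random sets differ only if some point lies in exactly one of them. -/
lemma measureReal_prod_setOf_ne_le {Ω₁ Ω₂ α : Type*} [MeasurableSpace Ω₁] [MeasurableSpace Ω₂]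
    [Fintype α] (μ₁ : Measure Ω₁) (μ₂ : Measure Ω₂) [IsProbabilityMeasure μ₁]
    [IsProbabilityMeasure μ₂] {R₁ : Ω₁ → Set α} {R₂ : Ω₂ → Set α}
    (hR₁ : ∀ i, MeasurableSet {ω | i ∉ R₁ ω}) (hR₂ : ∀ i, MeasurableSet {ω | i ∉ R₂ ω}) :
    (μ₁.prod μ₂).real {p | R₁ p.1 ≠ R₂ p.2} ≤
      ∑ i, (μ₁.real {ω | i ∉ R₁ ω} * (1 - μ₂.real {ω | i ∉ R₂ ω}) +
        (1 - μ₁.real {ω | i ∉ R₁ ω}) * μ₂.real {ω | i ∉ R₂ ω}) := by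
  have hsub : {p : Ω₁ × Ω₂ | R₁ p.1 ≠ R₂ p.2} ⊆ ⋃ i,
      ({ω | i ∉ R₁ ω} ×ˢ {ω | i ∉ R₂ ω}ᶜ ∪ {ω | i ∉ R₁ ω}ᶜ ×ˢ {ω | i ∉ R₂ ω}) := by
    intro p hp
    obtain ⟨i, hi⟩ : ∃ i, ¬(i ∈ R₁ p.1 ↔ i ∈ R₂ p.2) := by
      by_contra! h
      exact hp (Set.ext h)
    simp only [Set.mem_iUnion, Set.mem_union, Set.mem_prod, Set.mem_compl_iff, Set.mem_ofPred_eq,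
      not_not]
    exact ⟨i, by tauto⟩
  refine (measureReal_mono hsub).trans ((measureReal_iUnion_fintype_le _).trans
    (Finset.sum_le_sum fun i _ => (measureReal_union_le _ _).trans_eq ?_))
  rw [measureReal_prod_prod, measureReal_prod_prod, probReal_compl_eq_one_sub (hR₁ i),
    probReal_compl_eq_one_sub (hR₂ i)]

lemma measureReal_pi_prod_pi_range_ne_le {ι₁ ι₂ α : Type*} [Fintype ι₁] [Fintype ι₂]
    [Fintype α] [MeasurableSpace α] [MeasurableSingletonClass α] (ν : Measure α)
    [IsProbabilityMeasure ν] :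
    ((Measure.pi fun _ : ι₁ => ν).prod (Measure.pi fun _ : ι₂ => ν)).real
        {p | Set.range p.1 ≠ Set.range p.2} ≤
      ∑ i, ((1 - ν.real {i}) ^ Fintype.card ι₁ * (1 - (1 - ν.real {i}) ^ Fintype.card ι₂) +
        (1 - (1 - ν.real {i}) ^ Fintype.card ι₁) * (1 - ν.real {i}) ^ Fintype.card ι₂) := by
  simpa only [measureReal_pi_setOf_not_mem_range] using
    measureReal_prod_setOf_ne_le (Measure.pi fun _ : ι₁ => ν) (Measure.pi fun _ : ι₂ => ν)
      (R₁ := Set.range) (R₂ := Set.range)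
      (fun _ => (Set.toFinite _).measurableSet) (fun _ => (Set.toFinite _).measurableSet)

end MeasureTheory

theorem stmt4_general {X : Type*} [MetricSpace X] (l S₁ S₂ : ℕ) (hl : 1 ≤ l)
    (hS₁ : 1 ≤ S₁) (hS₂ : 1 ≤ S₂)
    (a : Fin l → X)
    (m : ℝ) (hdiam : Metric.diam (Set.range a) ≤ m)
    (φ : ℝ → ℝ) (hφ : MonotoneOn φ (Set.Ici 0)) :
    (∫ p : (Fin S₁ → Fin l) × (Fin S₂ → Fin l),
        φ (hausdorffDist (a '' Set.range p.1) (a '' Set.range p.2))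
      ∂((Measure.pi fun _ : Fin S₁ =>
            (PMF.uniformOfFinset (Finset.univ : Finset (Fin l))
              ⟨⟨0, hl⟩, Finset.mem_univ _⟩).toMeasure).prod
          (Measure.pi fun _ : Fin S₂ =>
            (PMF.uniformOfFinset (Finset.univ : Finset (Fin l))
              ⟨⟨0, hl⟩, Finset.mem_univ _⟩).toMeasure)))
      ≤ (φ m - φ 0) * ((l : ℝ) * ((1 - 1 / (l : ℝ)) ^ S₁ + (1 - 1 / (l : ℝ)) ^ S₂
          - 2 * (1 - 1 / (l : ℝ)) ^ (S₁ + S₂))) + φ 0 := by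
  set ν := (PMF.uniformOfFinset (Finset.univ : Finset (Fin l))
    ⟨⟨0, hl⟩, Finset.mem_univ _⟩).toMeasure
  have hν (i : Fin l) : ν.real {i} = 1 / l :=
    (measureReal_uniformOfFinset_univ_singleton _ i).trans (by simp)
  have hm : 0 ≤ m := diam_nonneg.trans hdiam
  have hdist (p : (Fin S₁ → Fin l) × (Fin S₂ → Fin l)) :
      hausdorffDist (a '' Set.range p.1) (a '' Set.range p.2) ≤ m :=
    (hausdorffDist_le_diam_of_subset ((@Set.range_nonempty _ _ ⟨⟨0, hS₁⟩⟩ p.1).image a)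
      ((@Set.range_nonempty _ _ ⟨⟨0, hS₂⟩⟩ p.2).image a) (Set.finite_range a).isBounded
      (Set.image_subset_range a _) (Set.image_subset_range a _)).trans hdiam
  have hne := measureReal_pi_prod_pi_range_ne_le (ι₁ := Fin S₁) (ι₂ := Fin S₂) ν
  simp only [hν, Fintype.card_fin, Finset.sum_const, Finset.card_univ, nsmul_eq_mul] at hne
  refine (integral_le_of_le_on_of_le_off (E := {p | Set.range p.1 ≠ Set.range p.2})
    (b := φ 0) Integrable.of_finite (Set.toFinite _).measurableSet
    (fun p _ => hφ hausdorffDist_nonneg hm (hdist p)) (fun p hp => ?_)).trans ?_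
  · rw [not_not.mp hp, hausdorffDist_self_zero]
  · gcongr
    · exact sub_nonneg.2 (hφ Set.self_mem_Ici hm hm)
    · exact hne.trans_eq (by ring)

/-- Lemma (Hausdorff-distance expectation bound): for `A = {a 1, …, a l}` with
`diam A ≤ m`, and `A₁, A₂` the sets of distinct values of `S₁`, `S₂` i.i.d.
uniform draws, `E[φ(h(A₁, A₂))] ≤ (φ m − φ 0)·λ(l,S₁,S₂) + φ 0`. -/
theorem stmt4 {X : Type*} [MetricSpace X] (l S₁ S₂ : ℕ) (hl : 1 ≤ l)
    (hS₁ : 1 ≤ S₁) (hS₂ : 1 ≤ S₂)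
    (a : Fin l → X) (ha : Function.Injective a)
    (m : ℝ) (hdiam : Metric.diam (Set.range a) ≤ m)
    (φ : ℝ → ℝ) (hφ : MonotoneOn φ (Set.Ici 0)) :
    (∫ p : (Fin S₁ → Fin l) × (Fin S₂ → Fin l),
        φ (hausdorffDist (a '' Set.range p.1) (a '' Set.range p.2))
      ∂((Measure.pi fun _ : Fin S₁ =>
            (PMF.uniformOfFinset (Finset.univ : Finset (Fin l))
              ⟨⟨0, hl⟩, Finset.mem_univ _⟩).toMeasure).prod
          (Measure.pi fun _ : Fin S₂ =>
            (PMF.uniformOfFinset (Finset.univ : Finset (Fin l))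
              ⟨⟨0, hl⟩, Finset.mem_univ _⟩).toMeasure)))
      ≤ (φ m - φ 0) * ((l : ℝ) * ((1 - 1 / (l : ℝ)) ^ S₁ + (1 - 1 / (l : ℝ)) ^ S₂
          - 2 * (1 - 1 / (l : ℝ)) ^ (S₁ + S₂))) + φ 0 :=
  stmt4_general l S₁ S₂ hl hS₁ hS₂ a m hdiam φ hφ
end

section
/- Let N ≥ 1 and l ≥ 1 be an integer, and let P_i^b = C(N,b) p^b (1−p)^{N−b} for p ∈ [0,1] be the binomial probability mass. Define λ(l,b,j) = l[(1−1/l)^b + (1−1/l)^j − 2(1−1/l)^{b}(1−1/l)^{j}]. Then Σ_{b=1}^{N} Σ_{j=1}^{N} P_i^b · P_i^j · λ(l, b, j) = 2l[ (1 − p/l)^N (1 − (1 − p/l)^N) + (1 − p)^N ((1 − p/l)^N − 1) ]. -/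
/-!
Writing `w_b` for the binomial weights and `q = 1 - 1/l`, the summand is
`l · w_b w_j (q^b + q^j - 2 q^b q^j)`, so the double sum factors as
`2l · (∑ w_b q^b) · (∑ w_b - ∑ w_b q^b)`. By the binomial theorem with the `b = 0` term removed,
`∑ w_b = 1 - (1-p)^N` and `∑ w_b q^b = (1 - p + pq)^N - (1-p)^N = (1 - p/l)^N - (1-p)^N`.
-/

open Finset

theorem sum_Icc_one_choose_mul_pow_mul_pow {R : Type*} [CommSemiring R] (N : ℕ) (a c : R) :
    ∑ b ∈ Icc 1 N, (N.choose b : R) * a ^ b * c ^ (N - b) + c ^ N = (a + c) ^ N := by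
  have hrange : range (N + 1) = insert 0 (Icc 1 N) := by
    ext k; simp only [mem_range, mem_insert, mem_Icc]; omega
  rw [add_pow, hrange, sum_insert (by simp)]
  simp only [pow_zero, Nat.sub_zero, Nat.choose_zero_right, Nat.cast_one, one_mul, mul_one]
  rw [add_comm]
  congr 1
  exact sum_congr rfl fun b _ => by ring

theorem sum_Icc_one_binomial_mul_pow {R : Type*} [CommRing R] (N : ℕ) (p x : R) :
    ∑ b ∈ Icc 1 N, (N.choose b : R) * p ^ b * (1 - p) ^ (N - b) * x ^ b
      = (1 - p + p * x) ^ N - (1 - p) ^ N := by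
  rw [eq_sub_iff_add_eq, add_comm (1 - p), ← sum_Icc_one_choose_mul_pow_mul_pow]
  congr 1
  exact sum_congr rfl fun b _ => by ring

theorem sum_sum_mul_mul_add_sub_two_mul {ι R : Type*} [CommRing R] (s : Finset ι) (w x : ι → R) :
    ∑ b ∈ s, ∑ j ∈ s, w b * w j * (x b + x j - 2 * x b * x j)
      = 2 * (∑ b ∈ s, w b * x b) * (∑ b ∈ s, w b - ∑ b ∈ s, w b * x b) := by
  calc _ = ∑ b ∈ s, ∑ j ∈ s,
        (w b * x b * w j + w b * (w j * x j) - 2 * (w b * x b * (w j * x j))) :=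
          sum_congr rfl fun b _ => sum_congr rfl fun j _ => by ring
    _ = _ := by
      simp only [sum_add_distrib, sum_sub_distrib, ← mul_sum, ← sum_mul]
      ring

theorem stmt8_general (N l : ℕ) (p : ℝ) :
    ∑ b ∈ Finset.Icc 1 N, ∑ j ∈ Finset.Icc 1 N,
        ((N.choose b : ℝ) * p ^ b * (1 - p) ^ (N - b)) *
          ((N.choose j : ℝ) * p ^ j * (1 - p) ^ (N - j)) *
          ((l : ℝ) * ((1 - 1 / (l : ℝ)) ^ b + (1 - 1 / (l : ℝ)) ^ j
              - 2 * (1 - 1 / (l : ℝ)) ^ b * (1 - 1 / (l : ℝ)) ^ j))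
      = 2 * (l : ℝ) * ((1 - p / (l : ℝ)) ^ N * (1 - (1 - p / (l : ℝ)) ^ N)
          + (1 - p) ^ N * ((1 - p / (l : ℝ)) ^ N - 1)) := by
  set w : ℕ → ℝ := fun b => (N.choose b : ℝ) * p ^ b * (1 - p) ^ (N - b)
  set q : ℝ := 1 - 1 / (l : ℝ)
  have hmass : ∑ b ∈ Icc 1 N, w b = 1 - (1 - p) ^ N := by
    simpa using sum_Icc_one_binomial_mul_pow N p 1
  have hmoment : ∑ b ∈ Icc 1 N, w b * q ^ b = (1 - p / l) ^ N - (1 - p) ^ N := by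
    rw [sum_Icc_one_binomial_mul_pow, show 1 - p + p * q = 1 - p / l by ring]
  simp_rw [mul_left_comm _ (l : ℝ), ← mul_sum]
  rw [sum_sum_mul_mul_add_sub_two_mul, hmass, hmoment]
  ring

/-- Closed-form evaluation of the binomially weighted double sum of `λ(l,b,j)`. -/
theorem stmt8 (N l : ℕ) (hN : 1 ≤ N) (hl : 1 ≤ l) (p : ℝ) (hp0 : 0 ≤ p) (hp1 : p ≤ 1) :
    ∑ b ∈ Finset.Icc 1 N, ∑ j ∈ Finset.Icc 1 N,
        ((N.choose b : ℝ) * p ^ b * (1 - p) ^ (N - b)) *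
          ((N.choose j : ℝ) * p ^ j * (1 - p) ^ (N - j)) *
          ((l : ℝ) * ((1 - 1 / (l : ℝ)) ^ b + (1 - 1 / (l : ℝ)) ^ j
              - 2 * (1 - 1 / (l : ℝ)) ^ b * (1 - 1 / (l : ℝ)) ^ j))
      = 2 * (l : ℝ) * ((1 - p / (l : ℝ)) ^ N * (1 - (1 - p / (l : ℝ)) ^ N)
          + (1 - p) ^ N * ((1 - p / (l : ℝ)) ^ N - 1)) :=
  stmt8_general N l p
end
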